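/- With ψ as in the FASA estimate-error drift, for every λ̄ ∈ (0, e^{−1}] there exists a unique ρ = ω(λ̄) ∈ (0, 1] such that ψ(ρ, λ̄) = 0. -/

import Mathlib

noncomputable def mu (ν q : ℝ) (km : ℕ) : ℝ :=
  ∑ k ∈ Finset.Icc 1 (km - 1), (k : ℝ) ^ ν * q ^ (k - 1) * (1 - q)
    + (km : ℝ) ^ ν * q ^ (km - 1)

noncomputable def q0 (ρ : ℝ) : ℝ := Real.exp (-ρ)
noncomputable def qc (ρ : ℝ) : ℝ := 1 - Real.exp (-ρ) - ρ * Real.exp (-ρ)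

noncomputable def h0 (η ν : ℝ) (km : ℕ) : ℝ := η / (Real.exp (-1) * mu ν (Real.exp (-1)) km)
noncomputable def hc (η ν : ℝ) (km : ℕ) : ℝ :=
  η / ((1 - 2 * Real.exp (-1)) * mu ν (1 - 2 * Real.exp (-1)) km)

/-- The FASA estimate-error drift ψ(ρ, λ̄). -/
noncomputable def ψdrift (η ν : ℝ) (km : ℕ) (lamBar ρ : ℝ) : ℝ :=
  (1 / (Real.exp 1 - 2) + hc η ν km * mu ν (qc ρ) km) * (1 - Real.exp (-ρ) - ρ * Real.exp (-ρ))
    - (1 + h0 η ν km * mu ν (q0 ρ) km) * Real.exp (-ρ) + ρ * Real.exp (-ρ) - lamBar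

lemma mu_rewrite (ν q : ℝ) (km : ℕ) (hkm : 1 ≤ km) :
    mu ν q km = 1 + ∑ j ∈ Finset.Icc 1 (km - 1), (((j : ℝ) + 1) ^ ν - (j : ℝ) ^ ν) * q ^ j := by
  induction km, hkm using Nat.le_induction with
  | base => simp [mu]
  | succ n hn ih =>
    obtain ⟨m, rfl⟩ : ∃ m, n = m + 1 := ⟨n - 1, (Nat.succ_pred_eq_of_pos hn).symm⟩
    have h1 : (1:ℕ) ≤ m + 1 := Nat.le_add_left 1 m
    rw [mu] at ih ⊢
    simp only [Nat.add_sub_cancel, Nat.add_sub_cancel_left] at ih ⊢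
    rw [Finset.sum_Icc_succ_top h1, Finset.sum_Icc_succ_top h1]
    push_cast at ih ⊢
    linear_combination ih

lemma mu_nonneg (ν : ℝ) (km : ℕ) {q : ℝ} (hq0 : 0 ≤ q) (hq1 : q ≤ 1) : 0 ≤ mu ν q km := by
  unfold mu
  refine add_nonneg (Finset.sum_nonneg fun k _ => ?_)
    (mul_nonneg (Real.rpow_nonneg (Nat.cast_nonneg km) ν) (pow_nonneg hq0 _))
  exact mul_nonneg (mul_nonneg (Real.rpow_nonneg (Nat.cast_nonneg k) ν) (pow_nonneg hq0 _))
    (by linarith)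

lemma mu_pos (ν : ℝ) (km : ℕ) (hkm : 1 ≤ km) {q : ℝ} (hq0 : 0 < q) (hq1 : q ≤ 1) :
    0 < mu ν q km := by
  have hsum : (0:ℝ) ≤ ∑ k ∈ Finset.Icc 1 (km - 1), (k : ℝ) ^ ν * q ^ (k - 1) * (1 - q) :=
    Finset.sum_nonneg fun k _ =>
      mul_nonneg (mul_nonneg (Real.rpow_nonneg (Nat.cast_nonneg k) ν) (pow_nonneg hq0.le _))
        (by linarith)
  have hlast : 0 < (km : ℝ) ^ ν * q ^ (km - 1) :=
    mul_pos (Real.rpow_pos_of_pos (by exact_mod_cast hkm) ν) (pow_pos hq0 _)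
  unfold mu; linarith

lemma mu_monotone (ν : ℝ) (hν : 0 ≤ ν) (km : ℕ) (hkm : 1 ≤ km) :
    MonotoneOn (fun q => mu ν q km) (Set.Icc (0:ℝ) 1) := by
  intro x hx y hy hxy
  simp only
  rw [mu_rewrite ν x km hkm, mu_rewrite ν y km hkm]
  have : ∀ j ∈ Finset.Icc 1 (km - 1),
      (((j : ℝ) + 1) ^ ν - (j : ℝ) ^ ν) * x ^ j ≤ (((j : ℝ) + 1) ^ ν - (j : ℝ) ^ ν) * y ^ j := by
    intro j hj
    have hc : (0:ℝ) ≤ ((j : ℝ) + 1) ^ ν - (j : ℝ) ^ ν :=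
      sub_nonneg.mpr (Real.rpow_le_rpow (by positivity) (by linarith) hν)
    exact mul_le_mul_of_nonneg_left (pow_le_pow_left₀ hx.1 hxy j) hc
  linarith [Finset.sum_le_sum this]

lemma exp_one_gt_two : (2:ℝ) < Real.exp 1 := by
  have := Real.exp_one_gt_d9; linarith

lemma two_exp_neg_lt_one : 2 * Real.exp (-1) < 1 := by
  have h : Real.exp (-1) * Real.exp 1 = 1 := by rw [← Real.exp_add]; norm_num
  nlinarith [Real.exp_pos (-1:ℝ), exp_one_gt_two]

lemma exp_neg_one_lt_one : Real.exp (-1) < 1 := by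
  nlinarith [Real.exp_pos (-1:ℝ), two_exp_neg_lt_one]

lemma qc_hasDerivAt (x : ℝ) : HasDerivAt qc (x * Real.exp (-x)) x := by
  have h : HasDerivAt (fun t : ℝ => Real.exp (-t)) (Real.exp (-x) * (-1)) x :=
    ((hasDerivAt_id x).neg).exp
  have h2 : HasDerivAt (fun t : ℝ => t * Real.exp (-t))
      (1 * Real.exp (-x) + x * (Real.exp (-x) * (-1))) x := (hasDerivAt_id x).mul h
  have h3 := ((hasDerivAt_const x (1:ℝ)).sub h).sub h2
  exact (show HasDerivAt qc _ x from h3).congr_deriv (by ring)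

lemma qc_strictMono : StrictMonoOn qc (Set.Icc (0:ℝ) 1) := by
  apply strictMonoOn_of_deriv_pos (convex_Icc 0 1)
  · have : Continuous qc := by unfold qc; fun_prop
    exact this.continuousOn
  · intro x hx
    rw [interior_Icc] at hx
    rw [(qc_hasDerivAt x).deriv]
    exact mul_pos hx.1 (Real.exp_pos _)

lemma p_strictMono : StrictMonoOn (fun ρ : ℝ => (ρ - 1) * Real.exp (-ρ)) (Set.Icc (0:ℝ) 1) := by
  apply strictMonoOn_of_deriv_pos (convex_Icc 0 1)
  · have : Continuous (fun ρ : ℝ => (ρ - 1) * Real.exp (-ρ)) := by fun_prop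
    exact this.continuousOn
  · intro x hx
    rw [interior_Icc] at hx
    have h : HasDerivAt (fun t : ℝ => Real.exp (-t)) (Real.exp (-x) * (-1)) x :=
      ((hasDerivAt_id x).neg).exp
    have h2 : HasDerivAt (fun t : ℝ => (t - 1) * Real.exp (-t))
        (1 * Real.exp (-x) + (x - 1) * (Real.exp (-x) * (-1))) x :=
      ((hasDerivAt_id x).sub_const 1).mul h
    rw [h2.deriv]
    nlinarith [Real.exp_pos (-x), hx.2]


lemma h0_pos {η ν : ℝ} (hη : 0 < η) (km : ℕ) (hkm : 1 ≤ km) : 0 < h0 η ν km :=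
  div_pos hη (mul_pos (Real.exp_pos _)
    (mu_pos ν km hkm (Real.exp_pos _) exp_neg_one_lt_one.le))

lemma hc_pos {η ν : ℝ} (hη : 0 < η) (km : ℕ) (hkm : 1 ≤ km) : 0 < hc η ν km := by
  have h1 : (0:ℝ) < 1 - 2 * Real.exp (-1) := by linarith [two_exp_neg_lt_one]
  have h2 : (1:ℝ) - 2 * Real.exp (-1) ≤ 1 := by nlinarith [Real.exp_pos (-1:ℝ)]
  exact div_pos hη (mul_pos h1 (mu_pos ν km hkm h1 h2))

lemma mu_one (ν : ℝ) (km : ℕ) : mu ν 1 km = (km : ℝ) ^ ν := by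
  unfold mu; simp

lemma psi_zero_neg {η ν lamBar : ℝ} (hη : 0 < η) (hlam : 0 < lamBar) (km : ℕ) (hkm : 1 ≤ km) :
    ψdrift η ν km lamBar 0 < 0 := by
  have h0p := h0_pos (ν := ν) hη km hkm
  have hmu1 : 0 < mu ν (q0 0) km := by
    rw [show q0 0 = 1 by unfold q0; simp, mu_one]
    exact Real.rpow_pos_of_pos (by exact_mod_cast hkm) ν
  have hqc0 : (1:ℝ) - Real.exp (-0) - 0 * Real.exp (-0) = 0 := by simp
  unfold ψdrift
  rw [hqc0]
  simp only [neg_zero, Real.exp_zero, mul_one, zero_mul, mul_zero]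
  nlinarith

lemma psi_one {η ν lamBar : ℝ} (hη : 0 < η) (km : ℕ) (hkm : 1 ≤ km) :
    ψdrift η ν km lamBar 1 = Real.exp (-1) - lamBar := by
  have hqc1 : qc 1 = 1 - 2 * Real.exp (-1) := by unfold qc; ring
  have hq01 : q0 1 = Real.exp (-1) := rfl
  have h1 : (0:ℝ) < 1 - 2 * Real.exp (-1) := by linarith [two_exp_neg_lt_one]
  have h2 : (1:ℝ) - 2 * Real.exp (-1) ≤ 1 := by nlinarith [Real.exp_pos (-1:ℝ)]
  have hMc : 0 < mu ν (1 - 2 * Real.exp (-1)) km := mu_pos ν km hkm h1 h2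
  have hM0 : 0 < mu ν (Real.exp (-1)) km :=
    mu_pos ν km hkm (Real.exp_pos _) exp_neg_one_lt_one.le
  have he2 : (0:ℝ) < Real.exp 1 - 2 := by linarith [exp_one_gt_two]
  have hee : Real.exp (-1) * Real.exp 1 = 1 := by rw [← Real.exp_add]; norm_num
  have key1 : hc η ν km * mu ν (1 - 2 * Real.exp (-1)) km * (1 - 2 * Real.exp (-1)) = η := by
    unfold hc; field_simp
  have key2 : h0 η ν km * mu ν (Real.exp (-1)) km * Real.exp (-1) = η := by
    unfold h0; field_simp [(Real.exp_pos (-1:ℝ)).ne']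
  have key3 : 1 / (Real.exp 1 - 2) * (1 - 2 * Real.exp (-1)) = Real.exp (-1) := by
    have h4 : (1:ℝ) - 2 * Real.exp (-1) = Real.exp (-1) * (Real.exp 1 - 2) := by
      linear_combination -hee
    rw [h4]; field_simp
  unfold ψdrift
  rw [hqc1, hq01]
  linear_combination key1 - key2 + key3

lemma psi_strictMono {η ν : ℝ} (hη : 0 < η) (hν : 0 < ν) (km : ℕ) (hkm : 1 ≤ km) (lamBar : ℝ) :
    StrictMonoOn (ψdrift η ν km lamBar) (Set.Icc (0:ℝ) 1) := by
  have hmono := mu_monotone ν hν.le km hkm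
  have hh0 := h0_pos (ν := ν) hη km hkm
  have hhc := hc_pos (ν := ν) hη km hkm
  have he2 : (0:ℝ) < Real.exp 1 - 2 := by linarith [exp_one_gt_two]
  have hqc0 : qc 0 = 0 := by unfold qc; simp
  have hqc1le : qc 1 ≤ 1 := by unfold qc; nlinarith [Real.exp_pos (-1:ℝ)]
  have hqcmem : ∀ z ∈ Set.Icc (0:ℝ) 1, qc z ∈ Set.Icc (0:ℝ) 1 := by
    intro z hz
    constructor
    · rw [← hqc0]
      exact qc_strictMono.monotoneOn (Set.left_mem_Icc.mpr zero_le_one) hz hz.1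
    · exact le_trans (qc_strictMono.monotoneOn hz (Set.right_mem_Icc.mpr zero_le_one) hz.2) hqc1le
  have hq0mem : ∀ z ∈ Set.Icc (0:ℝ) 1, q0 z ∈ Set.Icc (0:ℝ) 1 := by
    intro z hz
    exact ⟨(Real.exp_pos _).le, by
      rw [show (1:ℝ) = Real.exp 0 by simp]
      exact Real.exp_le_exp.mpr (by linarith [hz.1])⟩
  intro x hx y hy hxy
  have hqclt : qc x < qc y := qc_strictMono hx hy hxy
  have hqcle : qc x ≤ qc y := hqclt.le
  -- A x ≤ A y and A y > 0
  have hAle : 1 / (Real.exp 1 - 2) + hc η ν km * mu ν (qc x) km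
      ≤ 1 / (Real.exp 1 - 2) + hc η ν km * mu ν (qc y) km := by
    have := hmono (hqcmem x hx) (hqcmem y hy) hqcle
    nlinarith
  have hAypos : 0 < 1 / (Real.exp 1 - 2) + hc η ν km * mu ν (qc y) km := by
    have hmn := mu_nonneg ν km (hqcmem y hy).1 (hqcmem y hy).2
    positivity
  have hqcxnn : 0 ≤ qc x := (hqcmem x hx).1
  have hAC : (1 / (Real.exp 1 - 2) + hc η ν km * mu ν (qc x) km) * qc x
      < (1 / (Real.exp 1 - 2) + hc η ν km * mu ν (qc y) km) * qc y :=
    lt_of_le_of_lt (mul_le_mul_of_nonneg_right hAle hqcxnn)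
      (mul_lt_mul_of_pos_left hqclt hAypos)
  -- G decreasing
  have hq0lt : q0 y < q0 x := Real.exp_lt_exp.mpr (by linarith)
  have hq0ypos : 0 < q0 y := Real.exp_pos _
  have hmuy_pos : 0 < mu ν (q0 y) km := mu_pos ν km hkm hq0ypos (hq0mem y hy).2
  have hmu_le : mu ν (q0 y) km ≤ mu ν (q0 x) km :=
    hmono (hq0mem y hy) (hq0mem x hx) hq0lt.le
  have hG : mu ν (q0 y) km * Real.exp (-y) < mu ν (q0 x) km * Real.exp (-x) :=
    lt_of_lt_of_le
      (mul_lt_mul_of_pos_left (Real.exp_lt_exp.mpr (by linarith)) hmuy_pos)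
      (mul_le_mul_of_nonneg_right hmu_le (Real.exp_pos _).le)
  have hG' : h0 η ν km * (mu ν (q0 y) km * Real.exp (-y))
      < h0 η ν km * (mu ν (q0 x) km * Real.exp (-x)) := mul_lt_mul_of_pos_left hG hh0
  have hP : (x - 1) * Real.exp (-x) < (y - 1) * Real.exp (-y) := p_strictMono hx hy hxy
  have expand : ∀ ρ : ℝ, ψdrift η ν km lamBar ρ =
      (1 / (Real.exp 1 - 2) + hc η ν km * mu ν (qc ρ) km) * qc ρ
        - h0 η ν km * (mu ν (q0 ρ) km * Real.exp (-ρ)) + (ρ - 1) * Real.exp (-ρ) - lamBar := by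
    intro ρ; unfold ψdrift qc; ring
  rw [expand x, expand y]
  linarith

lemma psi_continuous (η ν : ℝ) (km : ℕ) (lamBar : ℝ) :
    Continuous (ψdrift η ν km lamBar) := by
  unfold ψdrift mu qc q0
  fun_prop


/-- For every λ̄ ∈ (0, e⁻¹], there is a unique root ρ = ω(λ̄) ∈ (0,1] of ψ(·, λ̄). -/
theorem psi_unique_root (η ν : ℝ) (hη : 0 < η) (hν : 0 < ν) (km : ℕ) (hkm : 2 ≤ km)
    (lamBar : ℝ) (h1 : 0 < lamBar) (h2 : lamBar ≤ Real.exp (-1)) :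
    ∃! ρ : ℝ, ρ ∈ Set.Ioc (0 : ℝ) 1 ∧ ψdrift η ν km lamBar ρ = 0 := by
  have hkm1 : 1 ≤ km := le_trans one_le_two hkm
  have hF0 : ψdrift η ν km lamBar 0 < 0 := psi_zero_neg hη h1 km hkm1
  have hF1 : 0 ≤ ψdrift η ν km lamBar 1 := by rw [psi_one hη km hkm1]; linarith
  have hmono := psi_strictMono hη hν km hkm1 lamBar
  have hcont := (psi_continuous η ν km lamBar).continuousOn (s := Set.Icc (0:ℝ) 1)
  obtain ⟨ρ, hρmem, hFρ⟩ := intermediate_value_Icc zero_le_one hcont ⟨hF0.le, hF1⟩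
  have hρpos : 0 < ρ := by
    rcases lt_or_eq_of_le hρmem.1 with h | h
    · exact h
    · exfalso; rw [← h] at hFρ; linarith
  refine ⟨ρ, ⟨⟨hρpos, hρmem.2⟩, hFρ⟩, ?_⟩
  rintro ρ' ⟨⟨hρ'pos, hρ'le⟩, hFρ'⟩
  exact hmono.injOn ⟨hρ'pos.le, hρ'le⟩ hρmem (by rw [hFρ', hFρ])
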